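/- Let γ > 1 and let (y,v) range over the open set where 1+y > 0 and 1+y+v > 0. Define G(y,v) := 1 - (1+y)^{-2γ}(1+y+v)^{-γ}, G₂(y,v) := G(y,v) - 3γy - γv, H(y) := (1+y)² - (1+y)^{-2}, G_I(y,v) := (1+y)²(1 + γ^{-1} ∂_v G₂(y,v)) - 1, and G_{II1}(y,v) := γ^{-1}(1+y)² ∂_v G₂(y,v) · ((3γ-4)y + γv) + H(y) - 4y(1+y)² - (1+y)² G₂(y,v). Then for all such (y,v): ∂_v G_{II1}(y,v) = ∂_v G_I(y,v) · ((3γ-4)y + γv). -/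

import Mathlib

open Real Set

/-- `G(y,v)`, defined by `(1+y)^{-2γ}(1+y+v)^{-γ} = 1 - G(y,v)`. -/
noncomputable def Gfun (γ y v : ℝ) : ℝ := 1 - (1+y) ^ (-(2*γ)) * (1+y+v) ^ (-γ)

/-- `G₂(y,v) = G(y,v) - 3γy - γv`. -/
noncomputable def G2 (γ y v : ℝ) : ℝ := Gfun γ y v - 3*γ*y - γ*v

/-- `∂_v G₂(y,v)`. -/
noncomputable def dvG2 (γ y v : ℝ) : ℝ := deriv (fun v' => G2 γ y v') v

/-- `H(y) = (1+y)² - (1+y)^{-2}`. -/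
noncomputable def Hfun (y : ℝ) : ℝ := (1+y)^2 - ((1+y)^2)⁻¹

/-- `G_I(y,v) = (1+y)²(1 + γ^{-1}∂_v G₂(y,v)) - 1`. -/
noncomputable def GI (γ y v : ℝ) : ℝ := (1+y)^2 * (1 + γ⁻¹ * dvG2 γ y v) - 1

/-- `G_{II1}(y,v) = γ^{-1}(1+y)² ∂_vG₂ ((3γ-4)y + γv) + H(y) - 4y(1+y)² - (1+y)²G₂`. -/
noncomputable def GII1 (γ y v : ℝ) : ℝ :=
  γ⁻¹ * (1+y)^2 * dvG2 γ y v * ((3*γ-4)*y + γ*v)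
    + Hfun y - 4*y*(1+y)^2 - (1+y)^2 * G2 γ y v

/-! Write `g := G₂(y, ·)`, `a := (1+y)²` and `L(v) := (3γ-4)y + γv`. Only the shape of `G_I` and
`G_{II1}` in terms of `g` matters: since `L' = γ`, differentiating `γ⁻¹ a g' L` produces the term
`γ⁻¹ a g' L' = a g'`, which cancels the derivative of `-a g`, leaving `γ⁻¹ a g'' L = (∂_v G_I) L`. -/

theorem deriv_affine_mul_deriv_sub_eq {f : ℝ → ℝ} {v γ : ℝ} (hf : ContDiffAt ℝ 2 f v)
    (hγ : γ ≠ 0) (a b K : ℝ) :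
    deriv (fun t => γ⁻¹ * a * deriv f t * (b + γ * t) + K - a * f t) v
      = deriv (fun t => a * (1 + γ⁻¹ * deriv f t) - 1) v * (b + γ * v) := by
  have hf₁ : HasDerivAt f (deriv f v) v := (hf.differentiableAt (by norm_num)).hasDerivAt
  have hf₂ : HasDerivAt (deriv f) (deriv (deriv f) v) v :=
    ((hf.derivWithin (m := 1) (by norm_num)).differentiableAt (by norm_num)).hasDerivAt
  have hL : HasDerivAt (fun t => b + γ * t) γ v := by
    simpa using ((hasDerivAt_id v).const_mul γ).const_add b
  have hlhs : HasDerivAt (fun t => γ⁻¹ * a * deriv f t * (b + γ * t) + K - a * f t)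
      (γ⁻¹ * a * deriv (deriv f) v * (b + γ * v) + γ⁻¹ * a * deriv f v * γ - a * deriv f v) v :=
    (((hf₂.const_mul (γ⁻¹ * a)).mul hL).add_const K).sub (hf₁.const_mul a)
  have hrhs : HasDerivAt (fun t => a * (1 + γ⁻¹ * deriv f t) - 1)
      (a * (γ⁻¹ * deriv (deriv f) v)) v :=
    (((hf₂.const_mul γ⁻¹).const_add 1).const_mul a).sub_const 1
  rw [hlhs.deriv, hrhs.deriv]
  field_simp
  ring

theorem contDiffAt_G2 {γ y v : ℝ} {n : WithTop ℕ∞} (hv : 1 + y + v ≠ 0) :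
    ContDiffAt ℝ n (fun t => G2 γ y t) v := by
  unfold G2 Gfun
  have : ContDiffAt ℝ n (fun t => (1 + y + t) ^ (-γ)) v :=
    (contDiffAt_const.add contDiffAt_id).rpow_const_of_ne hv
  fun_prop

theorem bracket_vanishes_general (γ y v : ℝ) (hγ : 1 < γ)
    (hv : 0 < 1 + y + v) :
    deriv (fun v' => GII1 γ y v') v
      = deriv (fun v' => GI γ y v') v * ((3*γ-4)*y + γ*v) := by
  have hGII1 : (fun v' => GII1 γ y v') = fun t => γ⁻¹ * (1+y)^2 * deriv (fun v' => G2 γ y v') t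
      * ((3*γ-4)*y + γ*t) + (Hfun y - 4*y*(1+y)^2) - (1+y)^2 * G2 γ y t := by
    funext t
    simp only [GII1, dvG2]
    ring
  rw [hGII1]
  exact deriv_affine_mul_deriv_sub_eq (contDiffAt_G2 hv.ne') (zero_lt_one.trans hγ).ne' _ _ _

/-- The key cancellation `[U] = 0` in the proof of Proposition 5:
`∂_v G_{II1}(y,v) = ∂_v G_I(y,v) · ((3γ-4)y + γv)` wherever `1+y > 0` and
`1+y+v > 0`. -/
theorem bracket_vanishes (γ y v : ℝ) (hγ : 1 < γ)
    (hy : 0 < 1 + y) (hv : 0 < 1 + y + v) :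
    deriv (fun v' => GII1 γ y v') v
      = deriv (fun v' => GI γ y v') v * ((3*γ-4)*y + γ*v) :=
  bracket_vanishes_general γ y v hγ hv
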